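/- arXiv:1003.2285 — 4 statements merged into one kernel-verified Lean document; each statement's English description precedes it below -/
import Mathlib

section
/- Let M be a smooth Minkowski space whose compatible semi-inner-product B satisfies the Lipschitz property. Then the following are equivalent: (1) B is non-decomposable; (2) every diagonalizable linear operator on M that is adjoint abelian with respect to B is a scalar multiple of an isometry of M. -/
/-!
If `B` is the direct sum of its restrictions to `U` and `V`, the projection onto `U` along `V`
is diagonalizable and adjoint abelian, yet it fixes `U` and kills `V`, so it is no multiple of an
isometry.

Conversely, let `A` be adjoint abelian with an eigenbasis and let `r` be the largest modulus of
its eigenvalues. If all eigenvalues have modulus `r`, then `A² = r²` and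
`‖A x‖² = B(x, A² x) = r² ‖x‖²`. Otherwise let `U` be spanned by the eigenvectors of modulus `r`
and `V` by the others. For `u ∈ U` we have `B(u, A^{2k} y) = r^{2k} B(u, y)`; after rescaling,
the `V`-component of `y` tends to `0` as `k → ∞`, so by continuity of `B(u, ·)` (from the
Lipschitz property) `B(u, s u + v) = s ‖u‖²` for `v ∈ V`. Since `B(x, y) = ‖y‖ · D‖·‖(y) x` is half
the derivative of `‖·‖²` at `y` in direction `x`, integrating in `s` gives
`‖u + v‖² = ‖u‖² + ‖v‖²`, and differentiating this identity shows that `B` is the direct sum of its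
restrictions to `U` and `V`.
-/

open Filter Topology

/-- Positivity and definiteness of `B` follow from `norm_sq`. -/
structure IsCompatibleSemiInnerProduct {M : Type*} [NormedAddCommGroup M] [NormedSpace ℝ M]
    (B : M → M → ℝ) : Prop where
  add_left : ∀ x y z : M, B (x + y) z = B x z + B y z
  smul_left : ∀ (c : ℝ) (x y : M), B (c • x) y = c * B x y
  sq_apply_le : ∀ x y : M, B x y ^ 2 ≤ B x x * B y y
  norm_sq : ∀ x : M, ‖x‖ ^ 2 = B x x

def IsAdjointAbelian {M : Type*} [AddCommGroup M] [Module ℝ M] (B : M → M → ℝ)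
    (A : M →ₗ[ℝ] M) : Prop :=
  ∀ x y : M, B (A x) y = B x (A y)

def IsDirectSumOn {M : Type*} [AddCommGroup M] [Module ℝ M] (B : M → M → ℝ)
    (U V : Submodule ℝ M) : Prop :=
  ∀ xu ∈ U, ∀ yu ∈ U, ∀ xv ∈ V, ∀ yv ∈ V, B (xu + xv) (yu + yv) = B xu yu + B xv yv

def IsDecomposable {M : Type*} [AddCommGroup M] [Module ℝ M] (B : M → M → ℝ) : Prop :=
  ∃ U V : Submodule ℝ M, U ≠ ⊥ ∧ V ≠ ⊥ ∧ IsCompl U V ∧ IsDirectSumOn B U V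

theorem IsAdjointAbelian.pow {M : Type*} [AddCommGroup M] [Module ℝ M] {B : M → M → ℝ}
    {f : M →ₗ[ℝ] M} (hf : IsAdjointAbelian B f) (k : ℕ) : IsAdjointAbelian B (f ^ k) := by
  induction k with
  | zero => intro x y; rfl
  | succ k ih =>
    intro x y
    calc B ((f ^ (k + 1)) x) y = B ((f ^ k) (f x)) y := by rw [pow_succ, Module.End.mul_apply]
      _ = B x ((f ^ (k + 1)) y) := by rw [ih, hf, ← Module.End.mul_apply, ← pow_succ']

theorem Module.End.pow_apply_of_apply_eq_smul {R M : Type*} [CommSemiring R]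
    [AddCommMonoid M] [Module R M] {f : Module.End R M} {μ : R} {v : M} (hv : f v = μ • v)
    (k : ℕ) : (f ^ k) v = μ ^ k • v := by
  induction k <;> simp [*, pow_succ f, smul_smul, pow_succ' μ]

theorem Submodule.tendsto_inv_pow_smul_pow_apply_of_mem_span {M ι : Type*}
    [NormedAddCommGroup M] [NormedSpace ℝ M] {f : M →ₗ[ℝ] M} {ρ : ℝ} {v : ι → M} {μ : ι → ℝ}
    {t : Set ι} (hv : ∀ i ∈ t, f (v i) = μ i • v i) (hμ : ∀ i ∈ t, |μ i| < |ρ|) {w : M}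
    (hw : w ∈ Submodule.span ℝ (v '' t)) :
    Tendsto (fun k : ℕ => (ρ ^ k)⁻¹ • (f ^ k) w) atTop (𝓝 0) := by
  induction hw using Submodule.span_induction with
  | mem w hw =>
    obtain ⟨i, hi, rfl⟩ := hw
    have hρ : ρ ≠ 0 := abs_pos.1 ((abs_nonneg _).trans_lt (hμ i hi))
    have hpow : ∀ k : ℕ, (ρ ^ k)⁻¹ • (f ^ k) (v i) = (μ i / ρ) ^ k • v i := fun k => by
      rw [Module.End.pow_apply_of_apply_eq_smul (hv i hi), smul_smul, div_pow, inv_mul_eq_div]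
    have hlim := (tendsto_pow_atTop_nhds_zero_of_abs_lt_one (r := μ i / ρ)
      (by rw [abs_div, div_lt_one (abs_pos.2 hρ)]; exact hμ i hi)).smul_const (v i)
    simpa only [hpow, zero_smul] using hlim
  | zero => simp
  | add x y _ _ hx hy => simpa only [map_add, smul_add, add_zero] using hx.add hy
  | smul a x _ hx => simpa only [map_smul, smul_comm _ a, smul_zero] using hx.const_smul a

theorem exists_smul_isometry_of_norm_apply_eq {M : Type*} [NormedAddCommGroup M]
    [NormedSpace ℝ M] {A : M →ₗ[ℝ] M} {r : ℝ} (hr : 0 ≤ r) (h : ∀ x, ‖A x‖ = r * ‖x‖) :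
    ∃ (c : ℝ) (T : M →ₗ[ℝ] M), (∀ x : M, ‖T x‖ = ‖x‖) ∧ ∀ x : M, A x = c • T x := by
  rcases hr.eq_or_lt with rfl | hr
  · exact ⟨0, LinearMap.id, fun x => rfl, fun x => by simpa using h x⟩
  · refine ⟨r, r⁻¹ • A, fun x => ?_, fun x => ?_⟩
    · rw [LinearMap.smul_apply, norm_smul, h, Real.norm_eq_abs, abs_of_pos (inv_pos.2 hr),
        inv_mul_cancel_left₀ hr.ne']
    · rw [LinearMap.smul_apply, smul_inv_smul₀ hr.ne']

theorem Submodule.exists_basis_projection_apply_eq_smul {K E : Type*} [Field K] [AddCommGroup E]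
    [Module K E] [FiniteDimensional K E] {p q : Submodule K E} (h : IsCompl p q) :
    ∃ (ι : Type) (b : Module.Basis ι K E), ∀ i, ∃ μ : K, p.projection q h (b i) = μ • b i := by
  refine ⟨_, ((Module.finBasis K p).prod (Module.finBasis K q)).map (p.prodEquivOfIsCompl q h),
    ?_⟩
  rintro (i | i)
  · exact ⟨1, by simp⟩
  · exact ⟨0, by simp⟩

theorem Submodule.projection_ne_smul_isometry {M : Type*} [NormedAddCommGroup M]
    [NormedSpace ℝ M] {U V : Submodule ℝ M} (hU : U ≠ ⊥) (hV : V ≠ ⊥) (h : IsCompl U V) {c : ℝ}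
    {T : M →ₗ[ℝ] M} (hT : ∀ x, ‖T x‖ = ‖x‖) : ¬ ∀ x, U.projection V h x = c • T x := by
  intro hcT
  obtain ⟨u, hu, hu0⟩ := U.ne_bot_iff.1 hU
  obtain ⟨v, hv, hv0⟩ := V.ne_bot_iff.1 hV
  have hc : c = 0 := by
    have := congrArg norm ((hcT v).symm.trans (projection_apply_of_mem_right h hv))
    rw [norm_smul, hT, norm_zero, mul_eq_zero, norm_eq_zero, norm_eq_zero] at this
    exact this.resolve_right hv0
  exact hu0 (by simpa [hc, projection_apply_of_mem_left h hu] using hcT u)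

namespace IsCompatibleSemiInnerProduct

variable {M : Type*} [NormedAddCommGroup M] [NormedSpace ℝ M] {B : M → M → ℝ}

theorem abs_apply_le (hB : IsCompatibleSemiInnerProduct B) (x y : M) :
    |B x y| ≤ ‖x‖ * ‖y‖ := by
  rw [← sq_le_sq₀ (abs_nonneg _) (by positivity), sq_abs, mul_pow, hB.norm_sq, hB.norm_sq]
  exact hB.sq_apply_le x y

theorem apply_zero_left (hB : IsCompatibleSemiInnerProduct B) (y : M) : B 0 y = 0 := by
  simpa using hB.smul_left 0 0 y

theorem apply_zero_right (hB : IsCompatibleSemiInnerProduct B) (x : M) : B x 0 = 0 := by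
  simpa using hB.abs_apply_le x 0

/-- `t ↦ ‖y‖ * ‖y + t • x‖ - t * B x y` is minimal at `t = 0`, by the Schwarz
inequality applied to `B (y + t • x) y`. -/
theorem apply_eq_norm_mul_fderiv_norm (hB : IsCompatibleSemiInnerProduct B) {y : M}
    (hy : DifferentiableAt ℝ (‖·‖) y) (x : M) :
    B x y = ‖y‖ * fderiv ℝ (‖·‖) y x := by
  set q : ℝ → ℝ := fun t => ‖y‖ * ‖y + t • x‖ - t * B x y
  have hline : HasDerivAt (fun t : ℝ => y + t • x) x 0 := by
    simpa using ((hasDerivAt_id (0 : ℝ)).smul_const x).const_add y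
  have hq : HasDerivAt q (‖y‖ * fderiv ℝ (‖·‖) y x - B x y) 0 := by
    have hnorm := hy.hasFDerivAt.comp_hasDerivAt_of_eq (0 : ℝ) hline (by simp)
    exact (hnorm.const_mul ‖y‖).sub (hasDerivAt_mul_const (B x y))
  have hmin : IsLocalMin q 0 := Eventually.of_forall fun t => by
    have hsw := (le_abs_self _).trans (hB.abs_apply_le (y + t • x) y)
    rw [hB.add_left, hB.smul_left, ← hB.norm_sq] at hsw
    simp only [q, zero_smul, add_zero, zero_mul, sub_zero]
    nlinarith
  linarith [hmin.hasDerivAt_eq_zero hq]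

theorem apply_smul_right (hB : IsCompatibleSemiInnerProduct B)
    (hsmooth : ∀ y : M, y ≠ 0 → DifferentiableAt ℝ (‖·‖) y) (c : ℝ) (x y : M) :
    B x (c • y) = c * B x y := by
  rcases eq_or_ne c 0 with rfl | hc
  · simp [hB.apply_zero_right]
  rcases eq_or_ne y 0 with rfl | hy
  · simp [hB.apply_zero_right]
  rw [hB.apply_eq_norm_mul_fderiv_norm (hsmooth _ (smul_ne_zero hc hy)), fderiv_norm_smul,
    hB.apply_eq_norm_mul_fderiv_norm (hsmooth y hy), norm_smul, Real.norm_eq_abs,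
    smul_apply, smul_eq_mul]
  linear_combination ‖y‖ * fderiv ℝ (‖·‖) y x * abs_mul_sign c

theorem hasDerivAt_norm_sq_add_smul (hB : IsCompatibleSemiInnerProduct B)
    (hsmooth : ∀ y : M, y ≠ 0 → DifferentiableAt ℝ (‖·‖) y) (y x : M) (t : ℝ) :
    HasDerivAt (fun s : ℝ => ‖y + s • x‖ ^ 2) (2 * B x (y + t • x)) t := by
  have hline : HasDerivAt (fun s : ℝ => y + s • x) x t := by
    simpa using ((hasDerivAt_id t).smul_const x).const_add y
  rcases eq_or_ne (y + t • x) 0 with hz | hz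
  · have hy : y = -(t • x) := eq_neg_of_add_eq_zero_left hz
    have hsq : (fun s : ℝ => ‖y + s • x‖ ^ 2) = fun s => ‖x‖ ^ 2 * (s - t) ^ 2 := by
      funext s
      rw [hy, neg_add_eq_sub, ← sub_smul, norm_smul, Real.norm_eq_abs, mul_pow, sq_abs, mul_comm]
    rw [hsq, hz, hB.apply_zero_right, mul_zero]
    simpa using (((hasDerivAt_id t).sub_const t).pow 2).const_mul (‖x‖ ^ 2)
  · have hnorm := (hsmooth _ hz).hasFDerivAt.comp_hasDerivAt t hline
    refine (hnorm.pow 2).congr_deriv ?_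
    rw [hB.apply_eq_norm_mul_fderiv_norm (hsmooth _ hz)]
    simp only [Nat.cast_ofNat, Function.comp_apply, Nat.add_one_sub_one, pow_one]
    ring

theorem continuous_apply_right (hB : IsCompatibleSemiInnerProduct B)
    (hsmooth : ∀ y : M, y ≠ 0 → DifferentiableAt ℝ (‖·‖) y)
    (hlip : ∀ x : M, ‖x‖ = 1 → ∃ κ : ℝ, ∀ y z : M, ‖y‖ = 1 → ‖z‖ = 1 →
      |B x y - B x z| ≤ κ * ‖y - z‖) (x : M) :
    Continuous (B x) := by
  rcases eq_or_ne x 0 with rfl | hx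
  · rw [show B 0 = fun _ => 0 from funext hB.apply_zero_left]
    exact continuous_const
  have hxn : ‖x‖ ≠ 0 := norm_ne_zero_iff.2 hx
  obtain ⟨κ, hκ⟩ := hlip (‖x‖⁻¹ • x) (by simp [norm_smul, hxn])
  have hsphere : ContinuousOn (B x) (Metric.sphere 0 1) := by
    refine (LipschitzOnWith.of_dist_le' (f := B x) (K := ‖x‖ * κ) fun y hy z hz => ?_).continuousOn
    have h := hκ y z (by simpa using hy) (by simpa using hz)
    rw [hB.smul_left, hB.smul_left, ← mul_sub, abs_mul, abs_inv, abs_norm,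
      inv_mul_le_iff₀ (norm_pos_iff.2 hx)] at h
    simpa [Real.dist_eq, dist_eq_norm, mul_assoc] using h
  rw [continuous_iff_continuousAt]
  intro y₀
  rcases eq_or_ne y₀ 0 with rfl | hy₀
  · rw [ContinuousAt, hB.apply_zero_right]
    refine squeeze_zero_norm (fun y => hB.abs_apply_le x y) ?_
    exact (continuous_const.mul continuous_norm : Continuous fun y : M => ‖x‖ * ‖y‖).tendsto' 0 0
      (by simp)
  have hnormalize : ContinuousAt (fun y : M => ‖y‖⁻¹ • y) y₀ :=
    (continuous_norm.continuousAt.inv₀ (norm_ne_zero_iff.2 hy₀)).smul continuousAt_id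
  have hmaps : Set.MapsTo (fun y : M => ‖y‖⁻¹ • y) {0}ᶜ (Metric.sphere 0 1) := fun y hy => by
    simp [norm_smul, norm_ne_zero_iff.2 hy]
  have hcomp : ContinuousAt (fun y : M => B x (‖y‖⁻¹ • y)) y₀ :=
    ((hsphere _ (hmaps hy₀)).comp (f := fun y : M => ‖y‖⁻¹ • y) hnormalize.continuousWithinAt
      hmaps).continuousAt (isOpen_compl_singleton.mem_nhds hy₀)
  refine (continuous_norm.continuousAt.mul hcomp).congr ?_
  filter_upwards [isOpen_compl_singleton.mem_nhds hy₀] with y hy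
  show ‖y‖ * B x (‖y‖⁻¹ • y) = B x y
  rw [hB.apply_smul_right hsmooth, ← mul_assoc, mul_inv_cancel₀ (norm_ne_zero_iff.2 hy), one_mul]

/-- Iterating `f` multiplies `B xu (yu + w)` by `ρ ^ k` on both sides, which turns `w` into
`(ρ ^ k)⁻¹ • (f ^ k) w`; continuity lets this term vanish in the limit. -/
theorem apply_add_eq_of_tendsto (hB : IsCompatibleSemiInnerProduct B)
    (hsmooth : ∀ y : M, y ≠ 0 → DifferentiableAt ℝ (‖·‖) y) {xu yu w : M}
    (hcont : Continuous (B xu)) {f : M →ₗ[ℝ] M} (hf : IsAdjointAbelian B f) {ρ : ℝ} (hρ : ρ ≠ 0)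
    (hx : f xu = ρ • xu) (hy : f yu = ρ • yu)
    (hw : Tendsto (fun k : ℕ => (ρ ^ k)⁻¹ • (f ^ k) w) atTop (𝓝 0)) :
    B xu (yu + w) = B xu yu := by
  have hconst : ∀ k : ℕ, B xu (yu + (ρ ^ k)⁻¹ • (f ^ k) w) = B xu (yu + w) := fun k => by
    have hk : ρ ^ k ≠ 0 := pow_ne_zero k hρ
    apply mul_left_cancel₀ hk
    calc ρ ^ k * B xu (yu + (ρ ^ k)⁻¹ • (f ^ k) w)
        = B xu (ρ ^ k • (yu + (ρ ^ k)⁻¹ • (f ^ k) w)) := (hB.apply_smul_right hsmooth _ _ _).symm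
      _ = B xu ((f ^ k) (yu + w)) := by
        rw [map_add, Module.End.pow_apply_of_apply_eq_smul hy, smul_add, smul_inv_smul₀ hk]
      _ = B ((f ^ k) xu) (yu + w) := (hf.pow k _ _).symm
      _ = ρ ^ k * B xu (yu + w) := by rw [Module.End.pow_apply_of_apply_eq_smul hx, hB.smul_left]
  have hlim := (hcont.tendsto yu).comp (by simpa using tendsto_const_nhds.add hw :
    Tendsto (fun k : ℕ => yu + (ρ ^ k)⁻¹ • (f ^ k) w) atTop (𝓝 yu))
  simp only [Function.comp_def, hconst] at hlim
  exact tendsto_nhds_unique tendsto_const_nhds hlim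

theorem norm_add_sq_of_apply_add_smul (hB : IsCompatibleSemiInnerProduct B)
    (hsmooth : ∀ y : M, y ≠ 0 → DifferentiableAt ℝ (‖·‖) y) {u v : M}
    (h : ∀ s : ℝ, B u (v + s • u) = s * ‖u‖ ^ 2) :
    ‖u + v‖ ^ 2 = ‖u‖ ^ 2 + ‖v‖ ^ 2 := by
  have hderiv : ∀ s : ℝ, HasDerivAt (fun s : ℝ => ‖v + s • u‖ ^ 2 - s ^ 2 * ‖u‖ ^ 2) 0 s :=
    fun s => by
      refine ((hB.hasDerivAt_norm_sq_add_smul hsmooth v u s).sub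
        ((hasDerivAt_pow 2 s).mul_const (‖u‖ ^ 2))).congr_deriv ?_
      rw [h]
      ring
  have := is_const_of_deriv_eq_zero (fun s => (hderiv s).differentiableAt)
    (fun s => (hderiv s).deriv) 1 0
  rw [add_comm u v]
  simp only [one_smul, zero_smul, add_zero, one_pow, one_mul, ne_eq, OfNat.ofNat_ne_zero,
    not_false_eq_true, zero_pow, zero_mul, sub_zero] at this
  linarith

theorem isDirectSumOn_of_norm_add_sq (hB : IsCompatibleSemiInnerProduct B)
    (hsmooth : ∀ y : M, y ≠ 0 → DifferentiableAt ℝ (‖·‖) y) {U V : Submodule ℝ M}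
    (h : ∀ u ∈ U, ∀ v ∈ V, ‖u + v‖ ^ 2 = ‖u‖ ^ 2 + ‖v‖ ^ 2) :
    IsDirectSumOn B U V := by
  intro xu hxu yu hyu xv hxv yv hyv
  have hsplit : (fun t : ℝ => ‖(yu + yv) + t • (xu + xv)‖ ^ 2) =
      fun t => ‖yu + t • xu‖ ^ 2 + ‖yv + t • xv‖ ^ 2 := funext fun t => by
    rw [← h _ (U.add_mem hyu (U.smul_mem t hxu)) _ (V.add_mem hyv (V.smul_mem t hxv))]
    congr 2
    module
  have hl := hB.hasDerivAt_norm_sq_add_smul hsmooth (yu + yv) (xu + xv) 0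
  have hr := (hB.hasDerivAt_norm_sq_add_smul hsmooth yu xu 0).add
    (hB.hasDerivAt_norm_sq_add_smul hsmooth yv xv 0)
  rw [hsplit] at hl
  simp only [zero_smul, add_zero] at hl hr
  linarith [hl.unique hr]

theorem isDirectSumOn_of_le_eigenspace (hB : IsCompatibleSemiInnerProduct B)
    (hsmooth : ∀ y : M, y ≠ 0 → DifferentiableAt ℝ (‖·‖) y) (hcont : ∀ x : M, Continuous (B x))
    {f : M →ₗ[ℝ] M} (hf : IsAdjointAbelian B f) {ρ : ℝ} (hρ : ρ ≠ 0) {U V : Submodule ℝ M}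
    (hU : U ≤ Module.End.eigenspace f ρ)
    (hV : ∀ w ∈ V, Tendsto (fun k : ℕ => (ρ ^ k)⁻¹ • (f ^ k) w) atTop (𝓝 0)) :
    IsDirectSumOn B U V := by
  refine hB.isDirectSumOn_of_norm_add_sq hsmooth fun u hu v hv =>
    hB.norm_add_sq_of_apply_add_smul hsmooth fun s => ?_
  have hsu : s • u ∈ U := U.smul_mem s hu
  rw [add_comm, hB.apply_add_eq_of_tendsto hsmooth (hcont u) hf hρ
    (Module.End.mem_eigenspace_iff.1 (hU hu)) (Module.End.mem_eigenspace_iff.1 (hU hsu))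
    (hV v hv), hB.apply_smul_right hsmooth, hB.norm_sq]

theorem exists_smul_isometry_of_adjointAbelian_sq (hB : IsCompatibleSemiInnerProduct B)
    (hsmooth : ∀ y : M, y ≠ 0 → DifferentiableAt ℝ (‖·‖) y) {A : M →ₗ[ℝ] M}
    (hA : IsAdjointAbelian B A) {r : ℝ} (hr : 0 ≤ r) (hAA : ∀ x, A (A x) = r ^ 2 • x) :
    ∃ (c : ℝ) (T : M →ₗ[ℝ] M), (∀ x : M, ‖T x‖ = ‖x‖) ∧ ∀ x : M, A x = c • T x := by
  have hnorm : ∀ x, ‖A x‖ = r * ‖x‖ := fun x => by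
    rw [← sq_eq_sq₀ (norm_nonneg _) (by positivity), hB.norm_sq, hA, hAA,
      hB.apply_smul_right hsmooth, mul_pow, hB.norm_sq]
  exact exists_smul_isometry_of_norm_apply_eq hr hnorm

theorem exists_smul_isometry_of_eigenbasis (hB : IsCompatibleSemiInnerProduct B)
    (hsmooth : ∀ y : M, y ≠ 0 → DifferentiableAt ℝ (‖·‖) y) (hcont : ∀ x : M, Continuous (B x))
    (hnd : ¬ IsDecomposable B) {A : M →ₗ[ℝ] M} (hA : IsAdjointAbelian B A) {ι : Type*}
    [Finite ι] (b : Module.Basis ι ℝ M) {μ : ι → ℝ} (hμ : ∀ i, A (b i) = μ i • b i) :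
    ∃ (c : ℝ) (T : M →ₗ[ℝ] M), (∀ x : M, ‖T x‖ = ‖x‖) ∧ ∀ x : M, A x = c • T x := by
  set r := ⨆ i, |μ i|
  have hle : ∀ i, |μ i| ≤ r := le_ciSup (Set.finite_range fun i => |μ i|).bddAbove
  have hA2 : ∀ i, (A ^ 2) (b i) = μ i ^ 2 • b i := fun i => by
    rw [pow_two, Module.End.mul_apply, hμ, map_smul, hμ, smul_smul, sq]
  by_cases hall : ∀ i, |μ i| = r
  · refine hB.exists_smul_isometry_of_adjointAbelian_sq hsmooth hA
      (r := r) (Real.iSup_nonneg fun i => abs_nonneg (μ i)) fun x => ?_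
    have hAA : A ^ 2 = r ^ 2 • (1 : M →ₗ[ℝ] M) :=
      b.ext fun i => by rw [hA2, ← sq_abs, hall]; rfl
    simpa [pow_two] using LinearMap.congr_fun hAA x
  obtain ⟨j, hj⟩ := not_forall.1 hall
  have hjr : |μ j| < r := (hle j).lt_of_ne hj
  have : Nonempty ι := ⟨j⟩
  obtain ⟨i₀, hi₀⟩ := exists_eq_ciSup_of_finite (f := fun i => |μ i|)
  have hr : r ≠ 0 := ((abs_nonneg _).trans_lt hjr).ne'
  set s := {i | |μ i| = r}
  refine absurd ⟨Submodule.span ℝ (b '' s), Submodule.span ℝ (b '' sᶜ), ?_, ?_,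
    b.linearIndependent.isCompl_span_image b.span_eq isCompl_compl,
    hB.isDirectSumOn_of_le_eigenspace hsmooth hcont (hA.pow 2) (pow_ne_zero 2 hr) ?_
      fun w hw => Submodule.tendsto_inv_pow_smul_pow_apply_of_mem_span (fun i _ => hA2 i) ?_ hw⟩
    hnd
  · exact (Submodule.ne_bot_iff _).2
      ⟨b i₀, Submodule.subset_span ⟨i₀, hi₀, rfl⟩, b.ne_zero i₀⟩
  · exact (Submodule.ne_bot_iff _).2
      ⟨b j, Submodule.subset_span ⟨j, hj, rfl⟩, b.ne_zero j⟩
  · rw [Submodule.span_le]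
    rintro _ ⟨i, hi, rfl⟩
    rw [SetLike.mem_coe, Module.End.mem_eigenspace_iff, hA2, ← sq_abs, hi]
  · intro i hi
    rw [abs_pow, abs_pow, abs_of_nonneg ((abs_nonneg _).trans hjr.le)]
    exact pow_lt_pow_left₀ ((hle i).lt_of_ne hi) (abs_nonneg _) two_ne_zero

theorem isAdjointAbelian_projection (hB : IsCompatibleSemiInnerProduct B)
    {U V : Submodule ℝ M} (h : IsDirectSumOn B U V) (hUV : IsCompl U V) :
    IsAdjointAbelian B (U.projection V hUV) := by
  intro x y
  have hx := Submodule.projection_add_projection_eq_self hUV x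
  have hy := Submodule.projection_add_projection_eq_self hUV y
  set xu := U.projection V hUV x
  set yu := U.projection V hUV y
  have hxu : xu ∈ U := Submodule.projection_apply_mem hUV x
  have hyu : yu ∈ U := Submodule.projection_apply_mem hUV y
  have hxv := Submodule.projection_apply_mem hUV.symm x
  have hyv := Submodule.projection_apply_mem hUV.symm y
  calc B xu y = B (xu + 0) (yu + V.projection U hUV.symm y) := by rw [add_zero, hy]
    _ = B (xu + V.projection U hUV.symm x) (yu + 0) := by
      rw [h _ hxu _ hyu _ V.zero_mem _ hyv, h _ hxu _ hyu _ hxv _ V.zero_mem,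
        hB.apply_zero_left, hB.apply_zero_right]
    _ = B x yu := by rw [add_zero, hx]

end IsCompatibleSemiInnerProduct

theorem nondecomposable_iff_adjoint_abelian_isometry_general
    {M : Type*} [NormedAddCommGroup M] [NormedSpace ℝ M] [FiniteDimensional ℝ M]
    (B : M → M → ℝ)
    (hadd : ∀ x y z : M, B (x + y) z = B x z + B y z)
    (hsmul : ∀ (c : ℝ) (x y : M), B (c • x) y = c * B x y)
    (hschwartz : ∀ x y : M, (B x y) ^ 2 ≤ B x x * B y y)
    (hcompat : ∀ x : M, ‖x‖ ^ 2 = B x x)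
    (hsmooth : ∀ x : M, x ≠ 0 → DifferentiableAt ℝ (fun y : M => ‖y‖) x)
    (hlip : ∀ x : M, ‖x‖ = 1 → ∃ κ : ℝ, ∀ y z : M, ‖y‖ = 1 → ‖z‖ = 1 →
      |B x y - B x z| ≤ κ * ‖y - z‖) :
    -- (1) B is non-decomposable
    (¬ ∃ U V : Submodule ℝ M, U ≠ ⊥ ∧ V ≠ ⊥ ∧ IsCompl U V ∧
        ∀ xu ∈ U, ∀ yu ∈ U, ∀ xv ∈ V, ∀ yv ∈ V,
          B (xu + xv) (yu + yv) = B xu yu + B xv yv) ↔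
    -- (2) every diagonalizable adjoint abelian operator is a scalar multiple of an isometry
    (∀ A : M →ₗ[ℝ] M,
        (∃ (ι : Type) (b : Module.Basis ι ℝ M), ∀ i, ∃ μ : ℝ, A (b i) = μ • b i) →
        (∀ x y : M, B (A x) y = B x (A y)) →
        ∃ (c : ℝ) (T : M →ₗ[ℝ] M), (∀ x : M, ‖T x‖ = ‖x‖) ∧ ∀ x : M, A x = c • T x) := by
  have hB : IsCompatibleSemiInnerProduct B := ⟨hadd, hsmul, hschwartz, hcompat⟩
  refine ⟨fun hnd A ⟨ι, b, hb⟩ hA => ?_, fun h ⟨U, V, hU, hV, hUV, hsum⟩ => ?_⟩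
  · choose μ hμ using hb
    have : Finite ι := Module.Finite.finite_basis b
    exact hB.exists_smul_isometry_of_eigenbasis hsmooth (hB.continuous_apply_right hsmooth hlip)
      hnd hA b hμ
  · obtain ⟨c, T, hT, hcT⟩ := h _ (Submodule.exists_basis_projection_apply_eq_smul hUV)
      (hB.isAdjointAbelian_projection hsum hUV)
    exact Submodule.projection_ne_smul_isometry hU hV hUV hT hcT

/-- In a smooth Minkowski space whose compatible semi-inner-product
satisfies the Lipschitz property, B is non-decomposable iff every diagonalizable adjoint
abelian operator is a scalar multiple of an isometry. -/
theorem nondecomposable_iff_adjoint_abelian_isometry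
    {M : Type*} [NormedAddCommGroup M] [NormedSpace ℝ M] [FiniteDimensional ℝ M]
    (B : M → M → ℝ)
    (hadd : ∀ x y z : M, B (x + y) z = B x z + B y z)
    (hsmul : ∀ (c : ℝ) (x y : M), B (c • x) y = c * B x y)
    (hpos : ∀ x : M, 0 ≤ B x x)
    (hdef : ∀ x : M, B x x = 0 → x = 0)
    (hschwartz : ∀ x y : M, (B x y) ^ 2 ≤ B x x * B y y)
    (hcompat : ∀ x : M, ‖x‖ ^ 2 = B x x)
    (hsmooth : ∀ x : M, x ≠ 0 → DifferentiableAt ℝ (fun y : M => ‖y‖) x)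
    (hlip : ∀ x : M, ‖x‖ = 1 → ∃ κ : ℝ, ∀ y z : M, ‖y‖ = 1 → ‖z‖ = 1 →
      |B x y - B x z| ≤ κ * ‖y - z‖) :
    -- (1) B is non-decomposable
    (¬ ∃ U V : Submodule ℝ M, U ≠ ⊥ ∧ V ≠ ⊥ ∧ IsCompl U V ∧
        ∀ xu ∈ U, ∀ yu ∈ U, ∀ xv ∈ V, ∀ yv ∈ V,
          B (xu + xv) (yu + yv) = B xu yu + B xv yv) ↔
    -- (2) every diagonalizable adjoint abelian operator is a scalar multiple of an isometry
    (∀ A : M →ₗ[ℝ] M,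
        (∃ (ι : Type) (b : Module.Basis ι ℝ M), ∀ i, ∃ μ : ℝ, A (b i) = μ • b i) →
        (∀ x y : M, B (A x) y = B x (A y)) →
        ∃ (c : ℝ) (T : M →ₗ[ℝ] M), (∀ x : M, ‖T x‖ = ‖x‖) ∧ ∀ x : M, A x = c • T x) :=
  nondecomposable_iff_adjoint_abelian_isometry_general B hadd hsmul hschwartz hcompat hsmooth hlip
end

section
/- Let M be a smooth Minkowski space with compatible semi-inner-product B. Then B satisfies the Lipschitz property if, and only if, for every x ∈ M the function y ↦ B(x,y) is uniformly continuous on M; that is, for every x ∈ M and every ε > 0 there is δ > 0 such that y, z ∈ M and ‖y − z‖ < δ imply |B(x,y) − B(x,z)| < ε. -/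
/-!
Fix `x`. For `y ≠ 0` the function `t ↦ ‖y + t • x‖ ‖y‖ - t B(x, y)` is minimal at `t = 0`,
since `B(y + t • x, y) = ‖y‖² + t B(x, y) ≤ ‖y + t • x‖ ‖y‖` by the Schwartz inequality; hence
`B(x, y) = ‖y‖ · D‖·‖(y) x`. The derivative of the norm is invariant under positive scaling, so
`y ↦ B(x, y)` is positively homogeneous. For a positively homogeneous function, both uniform
continuity and Lipschitz continuity on the unit sphere (where the Schwartz inequality bounds
`B(x, ·)`) are equivalent to Lipschitz continuity on the whole space.
-/

open Metric
open scoped NNReal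

section

variable {E F : Type*} [NormedAddCommGroup E] [NormedSpace ℝ E]
  [NormedAddCommGroup F] [NormedSpace ℝ F]

def PosHomogeneous (f : E → F) : Prop :=
  ∀ c : ℝ, 0 < c → ∀ y, f (c • y) = c • f y

theorem norm_mul_norm_inv_smul_sub_inv_smul_le (y z : E) :
    ‖z‖ * ‖‖y‖⁻¹ • y - ‖z‖⁻¹ • z‖ ≤ 2 * ‖y - z‖ := by
  have hself : ∀ w : E, ‖w‖ • ‖w‖⁻¹ • w = w := fun w => by
    rcases eq_or_ne w 0 with rfl | hw
    · simp
    · exact smul_inv_smul₀ (norm_ne_zero_iff.mpr hw) w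
  have hunit : ‖‖y‖⁻¹ • y‖ ≤ 1 := by
    rw [norm_smul, norm_inv, norm_norm]
    exact inv_mul_le_one_of_le₀ le_rfl (norm_nonneg y)
  calc ‖z‖ * ‖‖y‖⁻¹ • y - ‖z‖⁻¹ • z‖
      = ‖(‖z‖ - ‖y‖) • ‖y‖⁻¹ • y + (y - z)‖ := by
        rw [← norm_norm z, ← norm_smul, norm_norm, smul_sub, sub_smul, hself, hself]
        congr 1
        abel
    _ ≤ |‖z‖ - ‖y‖| * ‖‖y‖⁻¹ • y‖ + ‖y - z‖ := by
        rw [← Real.norm_eq_abs, ← norm_smul]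
        exact norm_add_le _ _
    _ ≤ ‖y - z‖ * 1 + ‖y - z‖ := by
        gcongr
        rw [norm_sub_rev y z]
        exact abs_norm_sub_norm_le z y
    _ = 2 * ‖y - z‖ := by ring

namespace PosHomogeneous

variable {f : E → F}

theorem apply_eq_norm_smul_apply_inv_norm_smul (hf : PosHomogeneous f) {w : E} (hw : w ≠ 0) :
    f w = ‖w‖ • f (‖w‖⁻¹ • w) := by
  rw [← hf _ (norm_pos_iff.mpr hw), smul_inv_smul₀ (norm_ne_zero_iff.mpr hw)]

theorem exists_lipschitzWith_of_uniformContinuous (hf : PosHomogeneous f)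
    (huc : UniformContinuous f) : ∃ K, LipschitzWith K f := by
  obtain ⟨δ, hδ, hclose⟩ := uniformContinuous_iff.mp huc 1 one_pos
  refine ⟨Real.toNNReal (2 / δ), LipschitzWith.of_dist_le' fun y z => ?_⟩
  rcases eq_or_ne y z with rfl | hyz
  · simp
  -- rescale `y` and `z` to distance `δ / 2`, where `f` moves by less than `1`
  have hd : 0 < dist y z := dist_pos.mpr hyz
  set c := 2 * dist y z / δ
  have hc : 0 < c := by positivity
  have hscaled : dist (c⁻¹ • y) (c⁻¹ • z) < δ := by
    rw [dist_smul₀, norm_inv, Real.norm_of_nonneg hc.le]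
    have : c⁻¹ * dist y z = δ / 2 := by simp only [c]; field_simp
    linarith
  calc dist (f y) (f z) = c * dist (f (c⁻¹ • y)) (f (c⁻¹ • z)) := by
        conv_lhs =>
          rw [← smul_inv_smul₀ hc.ne' y, ← smul_inv_smul₀ hc.ne' z, hf c hc, hf c hc]
        rw [dist_smul₀, Real.norm_of_nonneg hc.le]
    _ ≤ c * 1 := by gcongr; exact (hclose hscaled).le
    _ = 2 / δ * dist y z := by ring

theorem lipschitzWith_of_lipschitzOnWith_sphere (hf : PosHomogeneous f) {C κ : ℝ≥0}
    (hbound : ∀ y, ‖f y‖ ≤ C * ‖y‖) (hsphere : LipschitzOnWith κ f (sphere 0 1)) :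
    LipschitzWith (C + 2 * κ) f := by
  have hzero : f 0 = 0 := by simpa using hbound 0
  have hbound' : ∀ y, ‖f y‖ ≤ (C + 2 * κ) * ‖y‖ := fun y =>
    (hbound y).trans (by gcongr; exact le_add_of_nonneg_right (by positivity))
  refine LipschitzWith.of_dist_le_mul fun y z => ?_
  push_cast
  rw [dist_eq_norm, dist_eq_norm]
  rcases eq_or_ne y 0 with rfl | hy
  · simpa [hzero] using hbound' z
  rcases eq_or_ne z 0 with rfl | hz
  · simpa [hzero] using hbound' y
  have hunit : ∀ w : E, w ≠ 0 → ‖w‖⁻¹ • w ∈ sphere (0 : E) 1 := fun w hw => by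
    simpa using norm_smul_inv_norm (𝕜 := ℝ) hw
  set u := ‖y‖⁻¹ • y
  set v := ‖z‖⁻¹ • z
  have hu : ‖f u‖ ≤ C := by simpa [show ‖u‖ = 1 from norm_smul_inv_norm hy] using hbound u
  have huv : ‖f u - f v‖ ≤ κ * ‖u - v‖ := by
    simpa [dist_eq_norm] using hsphere.dist_le_mul u (hunit y hy) v (hunit z hz)
  calc ‖f y - f z‖ = ‖(‖y‖ - ‖z‖) • f u + ‖z‖ • (f u - f v)‖ := by
        rw [hf.apply_eq_norm_smul_apply_inv_norm_smul hy,
          hf.apply_eq_norm_smul_apply_inv_norm_smul hz]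
        congr 1
        rw [smul_sub, sub_smul]
        abel
    _ ≤ |‖y‖ - ‖z‖| * ‖f u‖ + ‖z‖ * (κ * ‖u - v‖) := by
        refine (norm_add_le _ _).trans ?_
        rw [norm_smul, norm_smul, Real.norm_eq_abs, norm_norm]
        gcongr
    _ ≤ ‖y - z‖ * C + κ * (2 * ‖y - z‖) := by
        rw [mul_left_comm]
        gcongr ?_ * ?_ + κ * ?_
        · exact abs_norm_sub_norm_le y z
        · exact norm_mul_norm_inv_smul_sub_inv_smul_le y z
    _ = (C + 2 * κ) * ‖y - z‖ := by ring

end PosHomogeneous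

end

section SemiInnerProduct

variable {M : Type*} [NormedAddCommGroup M] {B : M → M → ℝ}

theorem abs_le_norm_mul_norm_of_sq_le (hschwartz : ∀ x y : M, B x y ^ 2 ≤ B x x * B y y)
    (hcompat : ∀ x : M, ‖x‖ ^ 2 = B x x) (x y : M) : |B x y| ≤ ‖x‖ * ‖y‖ :=
  abs_le_of_sq_le_sq (by rw [mul_pow, hcompat, hcompat]; exact hschwartz x y) (by positivity)

variable [NormedSpace ℝ M]

theorem eq_norm_mul_fderiv_norm (hadd : ∀ x y z : M, B (x + y) z = B x z + B y z)
    (hsmul : ∀ (c : ℝ) (x y : M), B (c • x) y = c * B x y)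
    (hschwartz : ∀ x y : M, B x y ^ 2 ≤ B x x * B y y) (hcompat : ∀ x : M, ‖x‖ ^ 2 = B x x)
    {y : M} (x : M) (hy : DifferentiableAt ℝ (‖·‖) y) :
    B x y = ‖y‖ * fderiv ℝ (‖·‖) y x := by
  have hderiv : HasDerivAt (fun t : ℝ => ‖y + t • x‖ * ‖y‖ - t * B x y)
      (fderiv ℝ (‖·‖) y x * ‖y‖ - B x y) 0 := by
    have := ((hy.hasFDerivAt.hasLineDerivAt x).mul_const ‖y‖).sub
      ((hasDerivAt_id (0 : ℝ)).mul_const (B x y))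
    rwa [one_mul] at this
  have hmin : IsLocalMin (fun t : ℝ => ‖y + t • x‖ * ‖y‖ - t * B x y) 0 :=
    Filter.Eventually.of_forall fun t => by
      have hcs := (le_abs_self _).trans
        (abs_le_norm_mul_norm_of_sq_le hschwartz hcompat (y + t • x) y)
      rw [hadd, hsmul, ← hcompat] at hcs
      simp only [zero_smul, add_zero, zero_mul, sub_zero]
      nlinarith
  linarith [hmin.hasDerivAt_eq_zero hderiv]

theorem posHomogeneous_right (hadd : ∀ x y z : M, B (x + y) z = B x z + B y z)
    (hsmul : ∀ (c : ℝ) (x y : M), B (c • x) y = c * B x y)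
    (hschwartz : ∀ x y : M, B x y ^ 2 ≤ B x x * B y y) (hcompat : ∀ x : M, ‖x‖ ^ 2 = B x x)
    (hsmooth : ∀ y : M, y ≠ 0 → DifferentiableAt ℝ (‖·‖) y) (x : M) :
    PosHomogeneous (B x) := by
  intro c hc y
  rcases eq_or_ne y 0 with rfl | hy
  · have h0 : B x 0 = 0 := by simpa using abs_le_norm_mul_norm_of_sq_le hschwartz hcompat x 0
    simp [h0]
  rw [eq_norm_mul_fderiv_norm hadd hsmul hschwartz hcompat x (hsmooth _ (smul_ne_zero hc.ne' hy)),
    eq_norm_mul_fderiv_norm hadd hsmul hschwartz hcompat x (hsmooth y hy),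
    fderiv_norm_smul_pos hc, norm_smul, Real.norm_of_nonneg hc.le, smul_eq_mul]
  ring

end SemiInnerProduct

theorem lipschitz_iff_uniformly_continuous_general
    {M : Type*} [NormedAddCommGroup M] [NormedSpace ℝ M]
    (B : M → M → ℝ)
    (hadd : ∀ x y z : M, B (x + y) z = B x z + B y z)
    (hsmul : ∀ (c : ℝ) (x y : M), B (c • x) y = c * B x y)
    (hschwartz : ∀ x y : M, (B x y) ^ 2 ≤ B x x * B y y)
    (hcompat : ∀ x : M, ‖x‖ ^ 2 = B x x)
    (hsmooth : ∀ x : M, x ≠ 0 → DifferentiableAt ℝ (fun y : M => ‖y‖) x) :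
    (∀ x : M, ‖x‖ = 1 → ∃ κ : ℝ, ∀ y z : M, ‖y‖ = 1 → ‖z‖ = 1 →
        |B x y - B x z| ≤ κ * ‖y - z‖) ↔
    (∀ x : M, ∀ ε : ℝ, 0 < ε → ∃ δ : ℝ, 0 < δ ∧ ∀ y z : M, ‖y - z‖ < δ →
        |B x y - B x z| < ε) := by
  have hhom := posHomogeneous_right hadd hsmul hschwartz hcompat hsmooth
  have huc_iff : ∀ x, UniformContinuous (B x) ↔ ∀ ε : ℝ, 0 < ε → ∃ δ : ℝ, 0 < δ ∧
      ∀ y z : M, ‖y - z‖ < δ → |B x y - B x z| < ε := fun x => by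
    simp only [Metric.uniformContinuous_iff, dist_eq_norm]
    rfl
  simp_rw [← huc_iff]
  constructor
  · intro H x
    rcases eq_or_ne x 0 with rfl | hx
    · simpa [funext fun y => by simpa using hsmul 0 0 y] using uniformContinuous_const
    set u := ‖x‖⁻¹ • x
    have hu : ‖u‖ = 1 := norm_smul_inv_norm hx
    obtain ⟨κ, hκ⟩ := H u hu
    have hsphere : LipschitzOnWith (Real.toNNReal κ) (B u) (sphere 0 1) :=
      LipschitzOnWith.of_dist_le' fun y hy z hz => by
        simpa [dist_eq_norm, Real.dist_eq] using hκ y z (by simpa using hy) (by simpa using hz)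
    have hbound : ∀ y, ‖B u y‖ ≤ (1 : ℝ≥0) * ‖y‖ := fun y => by
      simpa [hu] using abs_le_norm_mul_norm_of_sq_le hschwartz hcompat u y
    have hBx : B x = fun y => ‖x‖ * B u y :=
      funext fun y => by rw [← hsmul, smul_inv_smul₀ (norm_ne_zero_iff.mpr hx)]
    rw [hBx]
    exact ((hhom u).lipschitzWith_of_lipschitzOnWith_sphere hbound hsphere).uniformContinuous
      |>.const_mul' _
  · intro H x _
    obtain ⟨K, hK⟩ := (hhom x).exists_lipschitzWith_of_uniformContinuous (H x)
    exact ⟨K, fun y z _ _ => by simpa [dist_eq_norm, Real.dist_eq] using hK.dist_le_mul y z⟩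

/-- The Lipschitz property holds iff for every x the function
y ↦ B(x,y) is uniformly continuous on M. -/
theorem lipschitz_iff_uniformly_continuous
    {M : Type*} [NormedAddCommGroup M] [NormedSpace ℝ M] [FiniteDimensional ℝ M]
    (B : M → M → ℝ)
    (hadd : ∀ x y z : M, B (x + y) z = B x z + B y z)
    (hsmul : ∀ (c : ℝ) (x y : M), B (c • x) y = c * B x y)
    (hpos : ∀ x : M, 0 ≤ B x x)
    (hdef : ∀ x : M, B x x = 0 → x = 0)
    (hschwartz : ∀ x y : M, (B x y) ^ 2 ≤ B x x * B y y)
    (hcompat : ∀ x : M, ‖x‖ ^ 2 = B x x)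
    (hsmooth : ∀ x : M, x ≠ 0 → DifferentiableAt ℝ (fun y : M => ‖y‖) x) :
    (∀ x : M, ‖x‖ = 1 → ∃ κ : ℝ, ∀ y z : M, ‖y‖ = 1 → ‖z‖ = 1 →
        |B x y - B x z| ≤ κ * ‖y - z‖) ↔
    (∀ x : M, ∀ ε : ℝ, 0 < ε → ∃ δ : ℝ, 0 < δ ∧ ∀ y z : M, ‖y - z‖ < δ →
        |B x y - B x z| < ε) :=
  lipschitz_iff_uniformly_continuous_general B hadd hsmul hschwartz hcompat hsmooth
end

section
/- Let M be a two-dimensional smooth Minkowski space whose compatible semi-inner-product B satisfies the Lipschitz property, and let e₁, e₂ ∈ M with ‖e₁‖ = ‖e₂‖ = 1 and B(e₁, α₁e₁ + α₂e₂) = α₁ for all α₁, α₂ ∈ ℝ. Then the norm of M is Euclidean with respect to the basis {e₁, e₂}: ‖α₁e₁ + α₂e₂‖² = α₁² + α₂² for all α₁, α₂ ∈ ℝ. Consequently also B(e₂, α₁e₁ + α₂e₂) = α₂ for all α₁, α₂ ∈ ℝ. -/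
/-!
Compatibility and the Schwartz inequality give `B x y ≤ ‖x‖ ‖y‖`, with equality at `x = y`, so
`t ↦ ‖y‖ ‖y + t x‖ - t B(x, y)` is minimal at `t = 0`. Differentiating identifies `B(·, y)` with
`‖y‖` times the derivative of the norm at `y`, i.e. `d/dt ‖a + t v‖² = 2 B(v, a + t v)`.
For `a = α₂ e₂`, `v = e₁` the hypothesis on `e₁` makes this `2t`, so `‖α₂ e₂ + t e₁‖² - t²` is
constant, equal to `α₂²`. Differentiating `‖α₁ e₁ + t e₂‖² = α₁² + t²` then gives `B(e₂, ·)`.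
-/

section SemiInnerProduct

variable {M : Type*} [NormedAddCommGroup M] {B : M → M → ℝ}

theorem abs_sip_le_norm_mul_norm (hschwartz : ∀ x y : M, (B x y) ^ 2 ≤ B x x * B y y)
    (hcompat : ∀ x : M, ‖x‖ ^ 2 = B x x) (x y : M) : |B x y| ≤ ‖x‖ * ‖y‖ :=
  abs_le_of_sq_le_sq (by rw [mul_pow, hcompat, hcompat]; exact hschwartz x y) (by positivity)

theorem sip_zero_right (hschwartz : ∀ x y : M, (B x y) ^ 2 ≤ B x x * B y y)
    (hcompat : ∀ x : M, ‖x‖ ^ 2 = B x x) (x : M) : B x 0 = 0 :=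
  abs_nonpos_iff.mp <| by simpa using abs_sip_le_norm_mul_norm hschwartz hcompat x 0

variable [NormedSpace ℝ M]

theorem sip_eq_norm_mul_fderiv (hadd : ∀ x y z : M, B (x + y) z = B x z + B y z)
    (hsmul : ∀ (c : ℝ) (x y : M), B (c • x) y = c * B x y)
    (hschwartz : ∀ x y : M, (B x y) ^ 2 ≤ B x x * B y y)
    (hcompat : ∀ x : M, ‖x‖ ^ 2 = B x x) {y : M} {φ : M →L[ℝ] ℝ}
    (hφ : HasFDerivAt (fun z : M => ‖z‖) φ y) (x : M) : B x y = ‖y‖ * φ x := by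
  set h : ℝ → ℝ := fun t => ‖y‖ * ‖y + t • x‖ - t * B x y
  have hmin : IsLocalMin h 0 := Filter.Eventually.of_forall fun t => by
    have hle := (le_abs_self _).trans (abs_sip_le_norm_mul_norm hschwartz hcompat (y + t • x) y)
    rw [hadd, hsmul, ← hcompat] at hle
    simp only [h, zero_smul, add_zero, zero_mul, sub_zero]
    nlinarith
  have hline : HasDerivAt (fun t : ℝ => y + t • x) x 0 := by
    simpa using ((hasDerivAt_id (0 : ℝ)).smul_const x).const_add y
  have hderiv : HasDerivAt h (‖y‖ * φ x - B x y) 0 := by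
    have hφ' : HasFDerivAt (fun z : M => ‖z‖) φ (y + (0 : ℝ) • x) := by simpa using hφ
    simpa using ((hφ'.comp_hasDerivAt 0 hline).const_mul ‖y‖).fun_sub
      ((hasDerivAt_id 0).mul_const (B x y))
  linarith [hmin.hasDerivAt_eq_zero hderiv]

theorem hasDerivAt_norm_sq_add_smul (hadd : ∀ x y z : M, B (x + y) z = B x z + B y z)
    (hsmul : ∀ (c : ℝ) (x y : M), B (c • x) y = c * B x y)
    (hschwartz : ∀ x y : M, (B x y) ^ 2 ≤ B x x * B y y)
    (hcompat : ∀ x : M, ‖x‖ ^ 2 = B x x)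
    (hsmooth : ∀ x : M, x ≠ 0 → DifferentiableAt ℝ (fun y : M => ‖y‖) x) (a v : M) (t : ℝ) :
    HasDerivAt (fun s : ℝ => ‖a + s • v‖ ^ 2) (2 * B v (a + t • v)) t := by
  by_cases hy : a + t • v = 0
  · have hfun : (fun s : ℝ => ‖a + s • v‖ ^ 2) = fun s => (s - t) ^ 2 * ‖v‖ ^ 2 := by
      funext s
      rw [eq_neg_of_add_eq_zero_left hy, neg_add_eq_sub, ← sub_smul, norm_smul, mul_pow,
        Real.norm_eq_abs, sq_abs]
    rw [hfun, hy, sip_zero_right hschwartz hcompat]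
    simpa using (((hasDerivAt_id t).sub_const t).pow 2).mul_const (‖v‖ ^ 2)
  · have hφ := (hsmooth _ hy).hasFDerivAt
    have hline : HasDerivAt (fun s : ℝ => a + s • v) v t := by
      simpa using ((hasDerivAt_id t).smul_const v).const_add a
    rw [sip_eq_norm_mul_fderiv hadd hsmul hschwartz hcompat hφ]
    refine ((hφ.comp_hasDerivAt t hline).fun_pow 2).congr_deriv ?_
    simp only [Function.comp_apply, Nat.cast_ofNat]
    ring

end SemiInnerProduct

theorem two_dim_euclidean_general
    {M : Type*} [NormedAddCommGroup M] [NormedSpace ℝ M]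
    (B : M → M → ℝ)
    (hadd : ∀ x y z : M, B (x + y) z = B x z + B y z)
    (hsmul : ∀ (c : ℝ) (x y : M), B (c • x) y = c * B x y)
    (hschwartz : ∀ x y : M, (B x y) ^ 2 ≤ B x x * B y y)
    (hcompat : ∀ x : M, ‖x‖ ^ 2 = B x x)
    (hsmooth : ∀ x : M, x ≠ 0 → DifferentiableAt ℝ (fun y : M => ‖y‖) x)
    (e₁ e₂ : M) (he₂ : ‖e₂‖ = 1)
    (hB1 : ∀ α₁ α₂ : ℝ, B e₁ (α₁ • e₁ + α₂ • e₂) = α₁) :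
    (∀ α₁ α₂ : ℝ, ‖α₁ • e₁ + α₂ • e₂‖ ^ 2 = α₁ ^ 2 + α₂ ^ 2) ∧
    (∀ α₁ α₂ : ℝ, B e₂ (α₁ • e₁ + α₂ • e₂) = α₂) := by
  have hderiv := hasDerivAt_norm_sq_add_smul hadd hsmul hschwartz hcompat hsmooth
  have hnorm : ∀ α₁ α₂ : ℝ, ‖α₁ • e₁ + α₂ • e₂‖ ^ 2 = α₁ ^ 2 + α₂ ^ 2 := by
    intro α₁ α₂
    have hconst : ∀ t, HasDerivAt (fun s : ℝ => ‖α₂ • e₂ + s • e₁‖ ^ 2 - s ^ 2) 0 t := fun t => by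
      simpa [add_comm _ (t • e₁), hB1] using (hderiv (α₂ • e₂) e₁ t).fun_sub (hasDerivAt_pow 2 t)
    have hval := is_const_of_deriv_eq_zero (fun t => (hconst t).differentiableAt)
      (fun t => (hconst t).deriv) α₁ 0
    simp only [zero_smul, add_zero, norm_smul, he₂, Real.norm_eq_abs, mul_one, sq_abs] at hval
    rw [add_comm]
    linarith
  refine ⟨hnorm, fun α₁ α₂ => ?_⟩
  have hpyth : HasDerivAt (fun t : ℝ => ‖α₁ • e₁ + t • e₂‖ ^ 2) (2 * α₂) α₂ := by
    simpa [hnorm] using (hasDerivAt_pow 2 α₂).const_add (α₁ ^ 2)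
  linarith [(hderiv (α₁ • e₁) e₂ α₂).unique hpyth]

/-- In a two-dimensional smooth Minkowski space with Lipschitz
semi-inner-product, if e₁, e₂ are unit vectors with B(e₁, α₁e₁ + α₂e₂) = α₁ for all α,
then the norm is Euclidean with respect to {e₁, e₂}, and B(e₂, α₁e₁ + α₂e₂) = α₂. -/
theorem two_dim_euclidean
    {M : Type*} [NormedAddCommGroup M] [NormedSpace ℝ M] [FiniteDimensional ℝ M]
    (hdim : Module.finrank ℝ M = 2)
    (B : M → M → ℝ)
    (hadd : ∀ x y z : M, B (x + y) z = B x z + B y z)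
    (hsmul : ∀ (c : ℝ) (x y : M), B (c • x) y = c * B x y)
    (hpos : ∀ x : M, 0 ≤ B x x)
    (hdef : ∀ x : M, B x x = 0 → x = 0)
    (hschwartz : ∀ x y : M, (B x y) ^ 2 ≤ B x x * B y y)
    (hcompat : ∀ x : M, ‖x‖ ^ 2 = B x x)
    (hsmooth : ∀ x : M, x ≠ 0 → DifferentiableAt ℝ (fun y : M => ‖y‖) x)
    (hlip : ∀ x : M, ‖x‖ = 1 → ∃ κ : ℝ, ∀ y z : M, ‖y‖ = 1 → ‖z‖ = 1 →
      |B x y - B x z| ≤ κ * ‖y - z‖)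
    (e₁ e₂ : M) (he₁ : ‖e₁‖ = 1) (he₂ : ‖e₂‖ = 1)
    (hB1 : ∀ α₁ α₂ : ℝ, B e₁ (α₁ • e₁ + α₂ • e₂) = α₁) :
    (∀ α₁ α₂ : ℝ, ‖α₁ • e₁ + α₂ • e₂‖ ^ 2 = α₁ ^ 2 + α₂ ^ 2) ∧
    (∀ α₁ α₂ : ℝ, B e₂ (α₁ • e₁ + α₂ • e₂) = α₂) :=
  two_dim_euclidean_general B hadd hsmul hschwartz hcompat hsmooth e₁ e₂ he₂ hB1
end

section
/- Let M be a smooth Minkowski space with compatible semi-inner-product B, and let A : M → M be a diagonalizable linear operator that is adjoint abelian with respect to B, all of whose eigenvalues have the same nonzero absolute value λ > 0. Then A = λT for some isometry T of M; that is, ‖Ax‖ = λ‖x‖ for every x ∈ M. -/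
/-!
Diagonalizing `A` in a basis of eigenvectors whose eigenvalues all satisfy `μ² = λ²` shows
`A² = λ² • id`. For a compatible semi-inner-product, homogeneity in the first variable together
with `B (c • x) (c • x) = ‖c • x‖² = c² B x x` forces `B x (c • x) = c B x x`, so adjoint
abelianness gives `‖A x‖² = B x (A (A x)) = λ² ‖x‖²`. Hence `λ⁻¹ • A` is an isometry.
-/

section SemiInnerProduct

variable {M : Type*} [NormedAddCommGroup M] [NormedSpace ℝ M] {B : M → M → ℝ}

theorem apply_smul_self_right_of_compat
    (hsmul : ∀ (c : ℝ) (x y : M), B (c • x) y = c * B x y)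
    (hcompat : ∀ x : M, ‖x‖ ^ 2 = B x x) {c : ℝ} (hc : c ≠ 0) (x : M) :
    B x (c • x) = c * B x x := by
  have h : c * B x (c • x) = c * (c * B x x) := by
    rw [← hsmul, ← hcompat, ← hcompat, norm_smul, mul_pow, Real.norm_eq_abs, sq_abs]
    ring
  exact mul_left_cancel₀ hc h

theorem norm_apply_eq_of_comp_self_eq_sq_smul
    (hsmul : ∀ (c : ℝ) (x y : M), B (c • x) y = c * B x y)
    (hcompat : ∀ x : M, ‖x‖ ^ 2 = B x x)
    {A : M →ₗ[ℝ] M} (habel : ∀ x y : M, B (A x) y = B x (A y))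
    {lam : ℝ} (hlam : 0 < lam) (hA : A ∘ₗ A = lam ^ 2 • LinearMap.id) (x : M) :
    ‖A x‖ = lam * ‖x‖ := by
  have hAAx : A (A x) = lam ^ 2 • x := by simpa using LinearMap.congr_fun hA x
  have hsq : ‖A x‖ ^ 2 = (lam * ‖x‖) ^ 2 := by
    rw [hcompat, habel, hAAx, apply_smul_self_right_of_compat hsmul hcompat (by positivity),
      mul_pow, hcompat]
  exact (pow_left_inj₀ (norm_nonneg _) (by positivity) two_ne_zero).mp hsq

end SemiInnerProduct

theorem comp_self_eq_sq_smul_id_of_abs_eigenvalue_eq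
    {M : Type*} [AddCommGroup M] [Module ℝ M] {ι : Type*} (b : Module.Basis ι ℝ M)
    {A : M →ₗ[ℝ] M} (hb : ∀ i, ∃ μ : ℝ, A (b i) = μ • b i) {lam : ℝ}
    (heig : ∀ μ : ℝ, Module.End.HasEigenvalue A μ → |μ| = lam) :
    A ∘ₗ A = lam ^ 2 • LinearMap.id := by
  refine b.ext fun i => ?_
  obtain ⟨μ, hμ⟩ := hb i
  have hev : Module.End.HasEigenvalue A μ :=
    Module.End.hasEigenvalue_of_hasEigenvector ⟨Module.End.mem_eigenspace_iff.mpr hμ, b.ne_zero i⟩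
  have hμ2 : μ ^ 2 = lam ^ 2 := by rw [← sq_abs, heig μ hev]
  simp [hμ, smul_smul, ← hμ2, sq]

theorem exists_isometry_smul_eq_of_norm_apply_eq_mul
    {M : Type*} [NormedAddCommGroup M] [NormedSpace ℝ M] {A : M →ₗ[ℝ] M} {lam : ℝ}
    (hlam : 0 < lam) (hA : ∀ x : M, ‖A x‖ = lam * ‖x‖) :
    ∃ T : M →ₗ[ℝ] M, (∀ x : M, ‖T x‖ = ‖x‖) ∧ ∀ x : M, A x = lam • T x := by
  refine ⟨lam⁻¹ • A, fun x => ?_, fun x => ?_⟩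
  · rw [LinearMap.smul_apply, norm_smul, hA, Real.norm_of_nonneg (inv_nonneg.mpr hlam.le),
      inv_mul_cancel_left₀ hlam.ne']
  · rw [LinearMap.smul_apply, smul_inv_smul₀ hlam.ne']

theorem adjoint_abelian_single_modulus_general
    {M : Type*} [NormedAddCommGroup M] [NormedSpace ℝ M]
    (B : M → M → ℝ)
    (hsmul : ∀ (c : ℝ) (x y : M), B (c • x) y = c * B x y)
    (hcompat : ∀ x : M, ‖x‖ ^ 2 = B x x)
    (A : M →ₗ[ℝ] M)
    -- A is diagonalizable:
    (hdiag : ∃ (ι : Type) (b : Module.Basis ι ℝ M), ∀ i, ∃ μ : ℝ, A (b i) = μ • b i)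
    -- A is adjoint abelian:
    (habel : ∀ x y : M, B (A x) y = B x (A y))
    -- all eigenvalues have the same nonzero absolute value λ:
    (lam : ℝ) (hlam : 0 < lam)
    (heig : ∀ μ : ℝ, Module.End.HasEigenvalue A μ → |μ| = lam) :
    ∃ T : M →ₗ[ℝ] M, (∀ x : M, ‖T x‖ = ‖x‖) ∧ ∀ x : M, A x = lam • T x := by
  obtain ⟨ι, b, hb⟩ := hdiag
  have hA2 := comp_self_eq_sq_smul_id_of_abs_eigenvalue_eq b hb heig
  exact exists_isometry_smul_eq_of_norm_apply_eq_mul hlam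
    (norm_apply_eq_of_comp_self_eq_sq_smul hsmul hcompat habel hlam hA2)

/-- A diagonalizable adjoint abelian operator on a smooth Minkowski
space all of whose eigenvalues have the same nonzero absolute value λ is λ times an
isometry. -/
theorem adjoint_abelian_single_modulus
    {M : Type*} [NormedAddCommGroup M] [NormedSpace ℝ M] [FiniteDimensional ℝ M]
    (B : M → M → ℝ)
    (hadd : ∀ x y z : M, B (x + y) z = B x z + B y z)
    (hsmul : ∀ (c : ℝ) (x y : M), B (c • x) y = c * B x y)
    (hpos : ∀ x : M, 0 ≤ B x x)
    (hdef : ∀ x : M, B x x = 0 → x = 0)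
    (hschwartz : ∀ x y : M, (B x y) ^ 2 ≤ B x x * B y y)
    (hcompat : ∀ x : M, ‖x‖ ^ 2 = B x x)
    (hsmooth : ∀ x : M, x ≠ 0 → DifferentiableAt ℝ (fun y : M => ‖y‖) x)
    (A : M →ₗ[ℝ] M)
    -- A is diagonalizable:
    (hdiag : ∃ (ι : Type) (b : Module.Basis ι ℝ M), ∀ i, ∃ μ : ℝ, A (b i) = μ • b i)
    -- A is adjoint abelian:
    (habel : ∀ x y : M, B (A x) y = B x (A y))
    -- all eigenvalues have the same nonzero absolute value λ:
    (lam : ℝ) (hlam : 0 < lam)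
    (heig : ∀ μ : ℝ, Module.End.HasEigenvalue A μ → |μ| = lam) :
    ∃ T : M →ₗ[ℝ] M, (∀ x : M, ‖T x‖ = ‖x‖) ∧ ∀ x : M, A x = lam • T x :=
  adjoint_abelian_single_modulus_general B hsmul hcompat A hdiag habel lam hlam heig
end
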